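/- Fix integers n > m ≥ k ≥ 1, a number field K of degree d, and a constant c_sup > 0. There exists a constant C > 0 (depending on c_sup, K, n, m, k) such that for all T ≥ 1: if D ∈ M_{k×m}(K) is an echelon matrix for which there exists A ∈ M_n(Λ_D) with rank(A) = k and ‖A‖ ≤ c_sup·T (i.e. D ∈ F_k(T)), then H(D) ≤ C·T^{kd}. -/

import Mathlib

noncomputable section
open NumberField NumberField.InfinitePlace MeasureTheory Module Submodule Matrix
attribute [local instance] Classical.propDecidable
set_option synthInstance.maxHeartbeats 1000000
set_option maxHeartbeats 1000000

/-! Setup: the space `K_ℝ = K ⊗ ℝ`, realized as the mixed space `ℝ^{r₁} × ℂ^{r₂}`, together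
with the Euclidean structure given by `‖x‖² = |Δ_K|^{-2/d}·Tr(x·x̄)`, extended coordinatewise
to vectors and matrices over `K_ℝ`. This Euclidean structure is realized through explicit
linear coordinates with values in `EuclideanSpace ℝ _`. -/

namespace Paper

variable (K : Type) [Field K] [NumberField K]

/-- The mixed space `K ⊗ ℝ ≅ ℝ^{r₁} × ℂ^{r₂}`. -/
abbrev MS : Type := NumberField.mixedEmbedding.mixedSpace K

/-- Real-coordinate index type for `K_ℝ`: one coordinate for each real place and two for each
complex place. -/
abbrev RIx : Type := {w : InfinitePlace K // IsReal w} ⊕ ({w : InfinitePlace K // IsComplex w} × Bool)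

/-- The scaling factor `|Δ_K|^{-1/d}`. -/
def sK : ℝ := (Int.natAbs (NumberField.discr K) : ℝ) ^ (-(1:ℝ) / (finrank ℚ K))

lemma sK_pos : 0 < sK K := by
  apply Real.rpow_pos_of_pos
  have := NumberField.discr_ne_zero K
  exact_mod_cast Int.natAbs_pos.mpr this

/-- Coordinates of `K_ℝ` realizing the Euclidean structure `‖x‖² = |Δ_K|^{-2/d}·Tr(x·x̄)`:
a real place `v` contributes the coordinate `|Δ_K|^{-1/d}·x_v` and a complex place `w`
contributes the two coordinates `|Δ_K|^{-1/d}·√2·Re(x_w)` and `|Δ_K|^{-1/d}·√2·Im(x_w)`,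
so that the standard Euclidean norm of the coordinates equals the norm above. -/
def eucMap : MS K ≃ₗ[ℝ] EuclideanSpace ℝ (RIx K) where
  toFun x := WithLp.toLp 2 (fun q => Sum.rec (fun v => sK K * x.1 v)
    (fun p => (sK K * Real.sqrt 2) * (if p.2 then (x.2 p.1).im else (x.2 p.1).re)) q)
  invFun y := (fun v => (sK K)⁻¹ * y (.inl v),
               fun w => ⟨(sK K * Real.sqrt 2)⁻¹ * y (.inr (w, false)),
                         (sK K * Real.sqrt 2)⁻¹ * y (.inr (w, true))⟩)
  map_add' x y := by
    ext q
    rcases q with v | ⟨w, b⟩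
    · show sK K * (x.1 v + y.1 v) = sK K * x.1 v + sK K * y.1 v
      ring
    · show (sK K * Real.sqrt 2) * (if b then (x.2 w + y.2 w).im else (x.2 w + y.2 w).re) = _
      cases b <;> simp [Complex.add_re, Complex.add_im] <;> ring
  map_smul' c x := by
    ext q
    rcases q with v | ⟨w, b⟩
    · show sK K * (c * x.1 v) = c * (sK K * x.1 v)
      ring
    · show (sK K * Real.sqrt 2) * (if b then (c • x.2 w).im else (c • x.2 w).re) = _
      cases b <;> simp [Complex.smul_re, Complex.smul_im] <;> ring
  left_inv x := by
    have h1 : sK K ≠ 0 := ne_of_gt (sK_pos K)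
    have h2 : sK K * Real.sqrt 2 ≠ 0 := by
      have h3 : (0:ℝ) < Real.sqrt 2 := Real.sqrt_pos.mpr (by norm_num)
      positivity
    refine Prod.ext (funext fun v => ?_) (funext fun w => ?_)
    · show (sK K)⁻¹ * (sK K * x.1 v) = x.1 v
      field_simp
    · show (⟨(sK K * Real.sqrt 2)⁻¹ * ((sK K * Real.sqrt 2) * (x.2 w).re),
            (sK K * Real.sqrt 2)⁻¹ * ((sK K * Real.sqrt 2) * (x.2 w).im)⟩ : ℂ) = x.2 w
      apply Complex.ext <;> field_simp
  right_inv y := by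
    have h1 : sK K ≠ 0 := ne_of_gt (sK_pos K)
    have h2 : sK K * Real.sqrt 2 ≠ 0 := by
      have h3 : (0:ℝ) < Real.sqrt 2 := Real.sqrt_pos.mpr (by norm_num)
      positivity
    ext q
    rcases q with v | ⟨w, b⟩
    · show sK K * ((sK K)⁻¹ * y (.inl v)) = y (.inl v)
      field_simp
    · cases b
      · show (sK K * Real.sqrt 2) * ((sK K * Real.sqrt 2)⁻¹ * y (.inr (w, false))) = _
        field_simp
      · show (sK K * Real.sqrt 2) * ((sK K * Real.sqrt 2)⁻¹ * y (.inr (w, true))) = _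
        field_simp

/-- Euclidean coordinates for vectors in `K_ℝ^m`. -/
def eucVec (m : ℕ) : (Fin m → MS K) ≃ₗ[ℝ] EuclideanSpace ℝ (Fin m × RIx K) where
  toFun x := WithLp.toLp 2 (fun p => eucMap K (x p.1) p.2)
  invFun y := fun i => (eucMap K).symm (WithLp.toLp 2 (fun q => y (i, q)))
  map_add' x y := by
    ext p
    show eucMap K (x p.1 + y p.1) p.2 = eucMap K (x p.1) p.2 + eucMap K (y p.1) p.2
    rw [map_add]; rfl
  map_smul' c x := by
    ext p
    show eucMap K (c • x p.1) p.2 = c * eucMap K (x p.1) p.2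
    rw [_root_.map_smul]; rfl
  left_inv x := by
    funext i
    show (eucMap K).symm (WithLp.toLp 2 (fun q => eucMap K (x i) q)) = x i
    exact (eucMap K).symm_apply_apply (x i)
  right_inv y := by
    ext p
    show eucMap K ((eucMap K).symm (WithLp.toLp 2 (fun q => y (p.1, q)))) p.2 = y p
    rw [(eucMap K).apply_symm_apply]

/-- Euclidean coordinates for matrices in `M_{n×m}(K_ℝ)`. -/
def eucMat (n m : ℕ) :
    Matrix (Fin n) (Fin m) (MS K) ≃ₗ[ℝ] EuclideanSpace ℝ (Fin n × Fin m × RIx K) where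
  toFun A := WithLp.toLp 2 (fun p => eucMap K (A p.1 p.2.1) p.2.2)
  invFun y := Matrix.of fun i j => (eucMap K).symm (WithLp.toLp 2 (fun q => y (i, j, q)))
  map_add' x y := by
    ext p
    show eucMap K (x p.1 p.2.1 + y p.1 p.2.1) p.2.2 = _
    rw [map_add]; rfl
  map_smul' c x := by
    ext p
    show eucMap K (c • x p.1 p.2.1) p.2.2 = c * eucMap K (x p.1 p.2.1) p.2.2
    rw [_root_.map_smul]; rfl
  left_inv x := by
    funext i j
    show (eucMap K).symm (WithLp.toLp 2 (fun q => eucMap K (x i j) q)) = x i j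
    exact (eucMap K).symm_apply_apply (x i j)
  right_inv y := by
    ext p
    show eucMap K ((eucMap K).symm (WithLp.toLp 2 (fun q => y (p.1, p.2.1, q)))) p.2.2 = y p
    rw [(eucMap K).apply_symm_apply]

/-- The Euclidean norm on `K_ℝ^m` (the `l²`-norm from `‖x‖² = |Δ_K|^{-2/d}·Tr(x·x̄)`,
extended coordinatewise). -/
def vnorm {m : ℕ} (x : Fin m → MS K) : ℝ := ‖eucVec K m x‖

/-- The Euclidean norm on `M_{n×m}(K_ℝ)`. -/
def mnorm {n m : ℕ} (A : Matrix (Fin n) (Fin m) (MS K)) : ℝ := ‖eucMat K n m A‖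

/-- The embedding of `M_{n×m}(O_K)` into `M_{n×m}(K_ℝ)`. -/
def embMat {n m : ℕ} (A : Matrix (Fin n) (Fin m) (𝓞 K)) : Matrix (Fin n) (Fin m) (MS K) :=
  A.map (fun a => NumberField.mixedEmbedding K (algebraMap (𝓞 K) K a))

/-- The rank (over `K`) of a matrix with entries in `O_K`. -/
def rankOK {n m : ℕ} (A : Matrix (Fin n) (Fin m) (𝓞 K)) : ℕ :=
  (A.map (algebraMap (𝓞 K) K)).rank

end Paper

/-! Generic notions for Euclidean spaces: oscillation, admissible functions, integration over
subspaces (with respect to the induced Lebesgue measure), covering radius and height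
(covolume) of lattices. -/

namespace Paper

/-- The oscillation function `E_f(x, ε) = sup_{‖x−y‖ ≤ ε} |f(x)−f(y)|`. -/
def Ef {V : Type} [NormedAddCommGroup V] (f : V → ℝ) (x : V) (ε : ℝ) : ℝ :=
  ⨆ y : {y : V // ‖x - y‖ ≤ ε}, |f x - f (y : V)|

/-- Integral of `g` over the subspace `W ⊆ V` with respect to the Lebesgue measure induced
on `W` by the inner product of `V` (computed in an orthonormal coordinate system of `W`). -/
def subInt {V : Type} [NormedAddCommGroup V] [InnerProductSpace ℝ V] [FiniteDimensional ℝ V]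
    (W : Submodule ℝ V) (g : V → ℝ) : ℝ :=
  ∫ y : EuclideanSpace ℝ (Fin (Module.finrank ℝ W)),
    g (((stdOrthonormalBasis ℝ W).repr.symm y : W) : V)

/-- A function on a Euclidean space is admissible with constant `Cf` if it is compactly
supported, measurable, and for every `ε > 0` and every nonzero real subspace `W`, the
integral of its oscillation `E_f(·, ε)` over `W` is at most `Cf·ε`. -/
def IsAdmissible {V : Type} [NormedAddCommGroup V] [InnerProductSpace ℝ V]
    [FiniteDimensional ℝ V] [MeasurableSpace V] [BorelSpace V] (f : V → ℝ) (Cf : ℝ) : Prop :=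
  HasCompactSupport f ∧ Measurable f ∧ 0 < Cf ∧
    ∀ ε : ℝ, 0 < ε → ∀ W : Submodule ℝ V, W ≠ ⊥ →
      subInt W (fun x => Ef f x ε) ≤ Cf * ε

/-- The covering radius of a subset `S` of a normed space:
`ρ(S) = sup_{x ∈ span ℝ S} inf_{v ∈ S} ‖x−v‖`. -/
def covRadV {V : Type} [NormedAddCommGroup V] [Module ℝ V] (S : Set V) : ℝ :=
  ⨆ x : Submodule.span ℝ S, ⨅ v : S, ‖(x : V) - (v : V)‖

/-- The height `H(L) = vol((L⊗ℝ)/L)` of a `ℤ`-submodule `L` of a Euclidean space, computed as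
the covolume of the image of `L` in an orthonormal coordinate system of `span ℝ L`. -/
def hgtV {V : Type} [NormedAddCommGroup V] [InnerProductSpace ℝ V] [FiniteDimensional ℝ V]
    (L : Submodule ℤ V) : ℝ :=
  ZLattice.covolume
    ((L.comap (((Submodule.span ℝ (L : Set V)).subtype).restrictScalars ℤ)).map
      (((stdOrthonormalBasis ℝ (Submodule.span ℝ (L : Set V))).repr.toLinearEquiv.restrictScalars
        ℤ).toLinearMap)) MeasureTheory.volume

end Paper

/-! Echelon matrices over `K`, the lattices `Λ_D`, the denominators `𝔇(D)`, heights,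
covering radii, and integrals `∫_{M_{n×k}(K_ℝ)} f(xD) dx`. -/

namespace Paper

variable (K : Type) [Field K] [NumberField K]

/-- `D` is a (full-rank) row-reduced echelon matrix: there are strictly increasing pivot
columns, pivot entries are `1`, entries to the left of a pivot vanish, and pivot columns
vanish in the other rows. -/
def IsEchelon {k m : ℕ} (D : Matrix (Fin k) (Fin m) K) : Prop :=
  ∃ p : Fin k → Fin m, StrictMono p ∧ (∀ i, D i (p i) = 1) ∧
    (∀ i (j : Fin m), (j : ℕ) < (p i : ℕ) → D i j = 0) ∧
    (∀ i i' : Fin k, i ≠ i' → D i' (p i) = 0)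

/-- The subgroup `{v ∈ O_K^k : Dᵀv ∈ O_K^m}` of `O_K^k`. -/
def denomGroup {k m : ℕ} (D : Matrix (Fin k) (Fin m) K) : AddSubgroup (Fin k → 𝓞 K) where
  carrier := {v | ∀ j, IsIntegral ℤ (∑ i, (algebraMap (𝓞 K) K (v i)) * D i j)}
  zero_mem' := by
    intro j
    simp only [Pi.zero_apply, map_zero, zero_mul, Finset.sum_const_zero]
    exact isIntegral_zero
  add_mem' {a b} ha hb := by
    intro j
    have : (∑ i, (algebraMap (𝓞 K) K ((a + b) i)) * D i j)
        = (∑ i, (algebraMap (𝓞 K) K (a i)) * D i j)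
          + (∑ i, (algebraMap (𝓞 K) K (b i)) * D i j) := by
      rw [← Finset.sum_add_distrib]
      congr 1; funext i
      simp [map_add, add_mul]
    rw [this]
    exact (ha j).add (hb j)
  neg_mem' {a} ha := by
    intro j
    have : (∑ i, (algebraMap (𝓞 K) K ((-a) i)) * D i j)
        = -(∑ i, (algebraMap (𝓞 K) K (a i)) * D i j) := by
      rw [← Finset.sum_neg_distrib]
      congr 1; funext i
      simp
    rw [this]
    exact (ha j).neg

/-- The denominator `𝔇(D) = [O_K^k : {v ∈ O_K^k : Dᵀv ∈ O_K^m}]`. -/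
def frD {k m : ℕ} (D : Matrix (Fin k) (Fin m) K) : ℕ := (denomGroup K D).index

/-- The set of `K`-rational rows `(M_{1×k}(K)·D) ∩ M_{1×m}(O_K)` (i.e. `Λ_D` at the level
of `K`-points). -/
def rowSpanInt {k m : ℕ} (D : Matrix (Fin k) (Fin m) K) : Set (Fin m → K) :=
  {v | (∃ c : Fin k → K, v = fun j => ∑ i, c i * D i j) ∧ ∀ j, IsIntegral ℤ (v j)}

/-- The lattice `Λ_D = (M_{1×k}(K)·D) ∩ M_{1×m}(O_K)`, embedded in `K_ℝ^m`. -/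
def LamD {k m : ℕ} (D : Matrix (Fin k) (Fin m) K) : Set (Fin m → MS K) :=
  (fun v : Fin m → K => fun j => NumberField.mixedEmbedding K (v j)) '' rowSpanInt K D

/-- The height `H(D) = H(Λ_D)`. -/
def hgtD {k m : ℕ} (D : Matrix (Fin k) (Fin m) K) : ℝ :=
  hgtV (Submodule.span ℤ ((eucVec K m) '' LamD K D))

/-- The covering radius `ρ(Λ_D)`. -/
def rhoD {k m : ℕ} (D : Matrix (Fin k) (Fin m) K) : ℝ :=
  covRadV ((eucVec K m) '' LamD K D)

/-- The integral `∫_{M_{n×k}(K_ℝ)} f(xD) dx` with respect to the Lebesgue measure induced by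
the Euclidean structure on `M_{n×k}(K_ℝ)`. -/
def intFD {n m k : ℕ} (f : Matrix (Fin n) (Fin m) (MS K) → ℝ)
    (D : Matrix (Fin k) (Fin m) K) : ℝ :=
  ∫ y : EuclideanSpace ℝ (Fin n × Fin k × RIx K),
    f ((eucMat K n k).symm y * D.map (NumberField.mixedEmbedding K))

/-- Admissibility for functions on `M_{n×m}(K_ℝ)`, read through the Euclidean coordinates. -/
def AdmissibleM {n m : ℕ} (f : Matrix (Fin n) (Fin m) (MS K) → ℝ) (Cf : ℝ) : Prop :=
  IsAdmissible (fun y : EuclideanSpace ℝ (Fin n × Fin m × RIx K) => f ((eucMat K n m).symm y)) Cf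

/-- The family `F_k(T)`: echelon matrices `D ∈ M_{k×m}(K)` such that some `A ∈ M_n(Λ_D)` has
`rank(A) = k` and `‖A‖ ≤ c_sup·T`. -/
def FkT (csup : ℝ) (n k m : ℕ) (T : ℝ) : Set (Matrix (Fin k) (Fin m) K) :=
  {D | IsEchelon K D ∧ ∃ A : Matrix (Fin n) (Fin m) K,
    (∀ i, A i ∈ rowSpanInt K D) ∧ A.rank = k ∧
      mnorm K (A.map (NumberField.mixedEmbedding K)) ≤ csup * T}

end Paper

/-!
STATEMENT 14: Fix integers n > m ≥ k ≥ 1, a number field K of degree d, and a constant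
c_sup > 0. There exists a constant C > 0 (depending on c_sup, K, n, m, k) such that for all
T ≥ 1: if D ∈ M_{k×m}(K) is an echelon matrix for which there exists A ∈ M_n(Λ_D) with
rank(A) = k and ‖A‖ ≤ c_sup·T (i.e. D ∈ F_k(T)), then H(D) ≤ C·T^{kd}.
-/

open Paper NumberField

/-! Let `L ⊂ K_ℝ^m` be the lattice `Λ_D` and `W` its real span. As `rank A = k`, the rows of `A`
span the same `K`-subspace of `K^m` as the rows of `D`; hence, for an integral basis `(ω_t)` of
`O_K`, the vectors `ω_t A_i` lie in `L` and span `W`, and `dim W ≤ k d`. Each has norm at most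
`c_K ‖A‖ ≤ c_K c_sup T`. A basis of `W` chosen among them spans a sublattice of `L`, so
`H(D) = covol L` is at most the volume of its fundamental parallelepiped, which lies in a ball
of radius `O(T)` and so has volume `O(T^{dim W}) = O(T^{kd})`. -/

theorem ZLattice.covolume_le_of_le {E : Type*} [NormedAddCommGroup E] [InnerProductSpace ℝ E]
    [FiniteDimensional ℝ E] [MeasurableSpace E] [BorelSpace E] {L₁ L₂ : Submodule ℤ E}
    [DiscreteTopology L₁] [IsZLattice ℝ L₁] [DiscreteTopology L₂] [IsZLattice ℝ L₂]
    (h : L₁ ≤ L₂) : ZLattice.covolume L₂ ≤ ZLattice.covolume L₁ := by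
  have hdiv := ZLattice.covolume_div_covolume_eq_relIndex' L₁ L₂ h
  have h₁ := ZLattice.covolume_pos L₁
  have h₂ := ZLattice.covolume_pos L₂
  have hidx : (1 : ℝ) ≤ L₁.toAddSubgroup.relIndex L₂.toAddSubgroup := by
    have hpos : (0 : ℝ) < L₁.toAddSubgroup.relIndex L₂.toAddSubgroup := hdiv ▸ div_pos h₁ h₂
    exact Nat.one_le_cast.mpr (Nat.cast_pos.mp hpos)
  rw [div_eq_iff h₂.ne'] at hdiv
  nlinarith

theorem EuclideanSpace.volume_closedBall_le {ι : Type*} [Fintype ι] (x : EuclideanSpace ℝ ι)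
    {R : ℝ} (hR : 0 ≤ R) :
    volume (Metric.closedBall x R) ≤ ENNReal.ofReal ((2 * R) ^ Fintype.card ι) := by
  rw [← Real.volume_pi_closedBall (WithLp.ofLp x) hR,
    ← (EuclideanSpace.volume_preserving_symm_measurableEquiv_toLp ι).measure_preimage_equiv]
  refine measure_mono fun y hy => ?_
  rw [Set.mem_preimage, Metric.mem_closedBall, dist_pi_le_iff hR]
  exact fun i => (PiLp.dist_apply_le y x i).trans (Metric.mem_closedBall.mp hy)

theorem ZLattice.covolume_span_le {ι η : Type*} [Fintype ι] [Fintype η]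
    (c : Basis η ℝ (EuclideanSpace ℝ ι)) :
    ZLattice.covolume (Submodule.span ℤ (Set.range c)) ≤ (2 * ∑ i, ‖c i‖) ^ Fintype.card ι := by
  have hR : 0 ≤ ∑ i, ‖c i‖ := Finset.sum_nonneg fun i _ => norm_nonneg _
  rw [ZLattice.covolume_eq_measure_fundamentalDomain _ _ (ZSpan.isAddFundamentalDomain c volume),
    measureReal_def, ← ENNReal.toReal_ofReal (by positivity : (0:ℝ) ≤ (2 * _) ^ _)]
  refine ENNReal.toReal_mono ENNReal.ofReal_ne_top ?_
  refine (measure_mono fun x hx => ?_).trans (EuclideanSpace.volume_closedBall_le 0 hR)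
  rw [mem_closedBall_zero_iff, ← ZSpan.fract_eq_self.mpr hx]
  exact ZSpan.norm_fract_le c x

theorem ZLattice.covolume_le_of_span_eq_top {ι : Type*} [Fintype ι]
    (Λ : Submodule ℤ (EuclideanSpace ℝ ι)) [DiscreteTopology Λ] {s : Set (EuclideanSpace ℝ ι)}
    (hsΛ : s ⊆ Λ) (hs : Submodule.span ℝ s = ⊤) {R : ℝ} (hR : ∀ v ∈ s, ‖v‖ ≤ R) :
    ZLattice.covolume Λ ≤ (2 * Fintype.card ι * R) ^ Fintype.card ι := by
  obtain ⟨t, hts, hspan, hli⟩ := exists_linearIndependent ℝ s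
  have : Fintype t := hli.setFinite.fintype
  let c : Basis t ℝ (EuclideanSpace ℝ ι) :=
    Basis.mk (v := ((↑) : t → EuclideanSpace ℝ ι)) hli (by rw [Subtype.range_coe, hspan, hs])
  have : IsZLattice ℝ Λ := ⟨top_unique (hs ▸ Submodule.span_mono hsΛ)⟩
  have hcΛ : Submodule.span ℤ (Set.range c) ≤ Λ := by
    rw [Submodule.span_le, Basis.coe_mk, Subtype.range_coe]
    exact hts.trans hsΛ
  have hcard : Fintype.card t = Fintype.card ι := by
    rw [← Module.finrank_eq_card_basis c, finrank_euclideanSpace]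
  have hsum : ∑ i, ‖c i‖ ≤ Fintype.card ι * R := by
    calc ∑ i, ‖c i‖ ≤ ∑ _i : t, R := Finset.sum_le_sum fun i _ => by simpa [c] using hR i (hts i.2)
      _ = Fintype.card ι * R := by rw [Finset.sum_const, Finset.card_univ, hcard, nsmul_eq_mul]
  calc ZLattice.covolume Λ ≤ ZLattice.covolume (Submodule.span ℤ (Set.range c)) :=
        ZLattice.covolume_le_of_le hcΛ
    _ ≤ (2 * ∑ i, ‖c i‖) ^ Fintype.card ι := ZLattice.covolume_span_le c
    _ ≤ (2 * Fintype.card ι * R) ^ Fintype.card ι := by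
        rw [mul_assoc]
        gcongr

theorem map_mem_span_range_basis_smul {K M E ι κ : Type*} [Field K] [CharZero K]
    [AddCommGroup M] [Module K M] [AddCommGroup E] [Module ℝ E] [Fintype ι] [Fintype κ]
    (φ : M →+ E) (b : Basis κ ℚ K) (f : ι → M) {x : M}
    (hx : x ∈ Submodule.span K (Set.range f)) :
    φ x ∈ Submodule.span ℝ (Set.range fun p : ι × κ => φ (b p.2 • f p.1)) := by
  obtain ⟨c, rfl⟩ := (Submodule.mem_span_range_iff_exists_fun (R := K)).mp hx
  rw [map_sum]
  refine Submodule.sum_mem _ fun i _ => ?_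
  have hc : c i • f i = ∑ t, ((b.repr (c i) t : ℚ) : K) • (b t • f i) := by
    conv_lhs => rw [← b.sum_repr (c i)]
    simp only [Finset.sum_smul, smul_smul, Rat.smul_def]
  rw [hc, map_sum]
  refine Submodule.sum_mem _ fun t _ => ?_
  rw [map_ratCast_smul φ K ℝ]
  exact Submodule.smul_mem _ _ (Submodule.subset_span ⟨(i, t), rfl⟩)

theorem finrank_span_image_le {K M E κ : Type*} [Field K] [CharZero K] [AddCommGroup M]
    [Module K M] [FiniteDimensional K M] [AddCommGroup E] [Module ℝ E] [FiniteDimensional ℝ E]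
    [Fintype κ] (φ : M →+ E) (b : Basis κ ℚ K) (V : Submodule K M) :
    finrank ℝ (Submodule.span ℝ (φ '' V)) ≤ finrank K V * Fintype.card κ := by
  let bV := Module.finBasis K V
  have hV : Submodule.span K (Set.range (V.subtype ∘ bV)) = V := by
    rw [Set.range_comp, ← Submodule.map_span, bV.span_eq, Submodule.map_top, Submodule.range_subtype]
  have hle : Submodule.span ℝ (φ '' V) ≤
      Submodule.span ℝ (Set.range fun p : Fin (finrank K V) × κ => φ (b p.2 • V.subtype (bV p.1))) :=
    Submodule.span_le.mpr <| Set.image_subset_iff.mpr fun x hx =>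
      map_mem_span_range_basis_smul φ b (V.subtype ∘ bV) (by rwa [hV])
  calc finrank ℝ (Submodule.span ℝ (φ '' V))
      ≤ Fintype.card (Fin (finrank K V) × κ) :=
        (Submodule.finrank_mono hle).trans (finrank_range_le_card _)
    _ = finrank K V * Fintype.card κ := by rw [Fintype.card_prod, Fintype.card_fin]

theorem Matrix.finrank_span_range_eq_rank {ι ι' F : Type*} [Field F] [Fintype ι] [Fintype ι']
    (A : Matrix ι ι' F) : finrank F (Submodule.span F (Set.range A)) = A.rank :=
  (Matrix.rank_eq_finrank_span_row A).symm

theorem Submodule.span_coe_preimage_eq_top {R V : Type*} [Ring R] [AddCommGroup V] [Module R V]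
    {W : Submodule R V} {s : Set V} (hs : Submodule.span R s = W) :
    Submodule.span R (((↑) : W → V) ⁻¹' s) = ⊤ := by
  subst hs
  exact Submodule.span_span_coe_preimage

namespace Paper

theorem hgtV_le_of_span_eq {V : Type} [NormedAddCommGroup V] [InnerProductSpace ℝ V]
    [FiniteDimensional ℝ V] (L : Submodule ℤ V) [DiscreteTopology L] {s : Set V}
    (hsL : s ⊆ L) (hs : Submodule.span ℝ s = Submodule.span ℝ (L : Set V)) {R : ℝ}
    (hR : ∀ v ∈ s, ‖v‖ ≤ R) :
    hgtV L ≤ (2 * finrank ℝ (Submodule.span ℝ (L : Set V)) * R) ^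
      finrank ℝ (Submodule.span ℝ (L : Set V)) := by
  set W := Submodule.span ℝ (L : Set V)
  set e := (stdOrthonormalBasis ℝ W).repr
  -- `hgtV L` is by definition the covolume of this lattice `Λ`.
  set Λ : Submodule ℤ (EuclideanSpace ℝ (Fin (finrank ℝ W))) :=
    (L.comap (W.subtype.restrictScalars ℤ)).map (e.toLinearEquiv.restrictScalars ℤ).toLinearMap
  have hΛ : Λ = ZLattice.comap ℝ L (W.subtype ∘ₗ e.symm.toLinearEquiv.toLinearMap) := by
    ext x
    exact Submodule.mem_map_equiv (e := e.toLinearEquiv.restrictScalars ℤ) (p := L.comap _)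
  have : DiscreteTopology Λ := hΛ ▸ ZLattice.comap_discreteTopology ℝ L
    (continuous_subtype_val.comp e.symm.continuous) (Subtype.val_injective.comp e.symm.injective)
  have key := ZLattice.covolume_le_of_span_eq_top Λ (s := e '' (((↑) : W → V) ⁻¹' s))
    (by
      rintro _ ⟨w, hw, rfl⟩
      exact Submodule.mem_map_of_mem (p := L.comap _) (hsL hw))
    (by
      rw [← LinearIsometryEquiv.coe_toLinearEquiv, ← LinearEquiv.coe_coe, Submodule.span_image,
        Submodule.span_coe_preimage_eq_top hs, Submodule.map_top, LinearEquiv.range])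
    (by
      rintro _ ⟨w, hw, rfl⟩
      rw [LinearIsometryEquiv.norm_map]
      exact hR w hw)
  rwa [Fintype.card_fin] at key

section RowSpan

variable (K : Type) [Field K]

theorem mem_span_rows_of_mem_rowSpanInt {k m : ℕ} {D : Matrix (Fin k) (Fin m) K}
    {v : Fin m → K} (hv : v ∈ rowSpanInt K D) : v ∈ Submodule.span K (Set.range D) := by
  obtain ⟨⟨c, rfl⟩, -⟩ := hv
  refine (Submodule.mem_span_range_iff_exists_fun (R := K)).mpr ⟨c, ?_⟩
  ext j
  simp [Finset.sum_apply]

theorem smul_mem_rowSpanInt {k m : ℕ} {D : Matrix (Fin k) (Fin m) K} {v : Fin m → K}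
    (hv : v ∈ rowSpanInt K D) {a : K} (ha : IsIntegral ℤ a) : a • v ∈ rowSpanInt K D := by
  obtain ⟨⟨c, rfl⟩, hint⟩ := hv
  refine ⟨⟨a • c, ?_⟩, fun j => ha.mul (hint j)⟩
  ext j
  simp [Finset.mul_sum, mul_assoc]

theorem rowSpanInt_subset_span_rows {n k m : ℕ} {D : Matrix (Fin k) (Fin m) K}
    {A : Matrix (Fin n) (Fin m) K} (hA : ∀ i, A i ∈ rowSpanInt K D) (hrank : A.rank = k) :
    rowSpanInt K D ⊆ Submodule.span K (Set.range A) := by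
  have hle : Submodule.span K (Set.range A) ≤ Submodule.span K (Set.range D) :=
    Submodule.span_le.mpr <| Set.range_subset_iff.mpr fun i =>
      mem_span_rows_of_mem_rowSpanInt K (hA i)
  have heq := Submodule.eq_of_le_of_finrank_le hle <| by
    rw [Matrix.finrank_span_range_eq_rank A, hrank]
    exact (finrank_range_le_card (R := K) D).trans_eq (Fintype.card_fin k)
  exact fun v hv => heq ▸ mem_span_rows_of_mem_rowSpanInt K hv

end RowSpan

variable (K : Type) [Field K] [NumberField K]

theorem integralBasis_smul_mem_rowSpanInt {k m : ℕ} {D : Matrix (Fin k) (Fin m) K}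
    {v : Fin m → K} (hv : v ∈ rowSpanInt K D) (t : Free.ChooseBasisIndex ℤ (𝓞 K)) :
    integralBasis K t • v ∈ rowSpanInt K D :=
  smul_mem_rowSpanInt K hv (integralBasis_apply K t ▸ RingOfIntegers.isIntegral_coe _)

theorem norm_eucMap_sq (z : MS K) :
    ‖eucMap K z‖ ^ 2 = sK K ^ 2 * (∑ v, z.1 v ^ 2 + 2 * ∑ w, Complex.normSq (z.2 w)) := by
  rw [EuclideanSpace.norm_sq_eq, Fintype.sum_sum_type, Fintype.sum_prod_type]
  simp only [eucMap, LinearEquiv.coe_mk, LinearMap.coe_mk, AddHom.coe_mk, Real.norm_eq_abs,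
    sq_abs, Fintype.sum_bool, Complex.normSq_apply, Finset.mul_sum, mul_add]
  congr 1
  · exact Finset.sum_congr rfl fun v _ => by ring
  · refine Finset.sum_congr rfl fun w _ => ?_
    simp only [if_true, Bool.false_eq_true, if_false, mul_pow, Real.sq_sqrt zero_le_two]
    ring

theorem norm_eucMap_mul_le (z y : MS K) :
    ‖eucMap K (z * y)‖ ≤ ‖eucMap K z‖ / sK K * ‖eucMap K y‖ := by
  have hs := sK_pos K
  set a := ‖eucMap K z‖ / sK K
  have hz := norm_eucMap_sq K z
  have hreal : ∀ v, z.1 v ^ 2 ≤ a ^ 2 := fun v => by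
    have := Finset.single_le_sum (fun v _ => sq_nonneg (z.1 v)) (Finset.mem_univ v)
    have := Finset.sum_nonneg fun w (_ : w ∈ Finset.univ) => Complex.normSq_nonneg (z.2 w)
    rw [div_pow, le_div_iff₀ (by positivity), hz]
    nlinarith
  have hcomplex : ∀ w, Complex.normSq (z.2 w) ≤ a ^ 2 := fun w => by
    have := Finset.single_le_sum (fun w _ => Complex.normSq_nonneg (z.2 w)) (Finset.mem_univ w)
    have := Finset.sum_nonneg fun v (_ : v ∈ Finset.univ) => sq_nonneg (z.1 v)
    rw [div_pow, le_div_iff₀ (by positivity), hz]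
    nlinarith [Complex.normSq_nonneg (z.2 w)]
  have key : ∑ v, (z * y).1 v ^ 2 + 2 * ∑ w, Complex.normSq ((z * y).2 w)
      ≤ a ^ 2 * (∑ v, y.1 v ^ 2 + 2 * ∑ w, Complex.normSq (y.2 w)) := by
    rw [mul_add, mul_left_comm (a ^ 2)]
    gcongr ?_ + 2 * ?_ <;> rw [Finset.mul_sum] <;> gcongr with i _
    · rw [Prod.fst_mul, Pi.mul_apply, mul_pow]
      exact mul_le_mul_of_nonneg_right (hreal i) (sq_nonneg _)
    · rw [Prod.snd_mul, Pi.mul_apply, Complex.normSq_mul]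
      exact mul_le_mul_of_nonneg_right (hcomplex i) (Complex.normSq_nonneg _)
  refine (pow_le_pow_iff_left₀ (norm_nonneg _) (by positivity) two_ne_zero).mp ?_
  rw [mul_pow, norm_eucMap_sq, norm_eucMap_sq, mul_left_comm]
  exact mul_le_mul_of_nonneg_left key (sq_nonneg _)

theorem norm_eucVec_sq {m : ℕ} (Y : Fin m → MS K) :
    ‖eucVec K m Y‖ ^ 2 = ∑ j, ‖eucMap K (Y j)‖ ^ 2 := by
  simp only [EuclideanSpace.norm_sq_eq, Fintype.sum_prod_type]
  rfl

theorem norm_eucVec_mul_le {m : ℕ} (z : MS K) (Y : Fin m → MS K) :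
    ‖eucVec K m (fun j => z * Y j)‖ ≤ ‖eucMap K z‖ / sK K * ‖eucVec K m Y‖ := by
  have := sK_pos K
  refine (pow_le_pow_iff_left₀ (norm_nonneg _) (by positivity) two_ne_zero).mp ?_
  rw [mul_pow, norm_eucVec_sq, norm_eucVec_sq, Finset.mul_sum]
  gcongr with j
  rw [← mul_pow]
  exact pow_le_pow_left₀ (norm_nonneg _) (norm_eucMap_mul_le K z (Y j)) 2

theorem norm_eucVec_row_le_mnorm {n m : ℕ} (A : Matrix (Fin n) (Fin m) (MS K)) (i : Fin n) :
    ‖eucVec K m (A i)‖ ≤ mnorm K A := by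
  have hA : mnorm K A ^ 2 = ∑ i, ‖eucVec K m (A i)‖ ^ 2 := by
    simp only [mnorm, EuclideanSpace.norm_sq_eq, Fintype.sum_prod_type]
    rfl
  refine (pow_le_pow_iff_left₀ (norm_nonneg _) (norm_nonneg (eucMat K n m A)) two_ne_zero).mp ?_
  rw [← mnorm, hA]
  exact Finset.single_le_sum (fun i _ => sq_nonneg ‖eucVec K m (A i)‖) (Finset.mem_univ i)

def eucEmb (m : ℕ) : (Fin m → K) →+ EuclideanSpace ℝ (Fin m × RIx K) :=
  (eucVec K m).toAddMonoidHom.comp ((mixedEmbedding K).toAddMonoidHom.compLeft (Fin m))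

theorem eucEmb_apply {m : ℕ} (x : Fin m → K) :
    eucEmb K m x = eucVec K m (fun j => mixedEmbedding K (x j)) := rfl

theorem image_LamD {k m : ℕ} (D : Matrix (Fin k) (Fin m) K) :
    eucVec K m '' LamD K D = eucEmb K m '' rowSpanInt K D := by
  rw [LamD, Set.image_image]
  rfl

theorem discreteTopology_span_eucEmb_image {m : ℕ} {S : Set (Fin m → K)}
    (hS : ∀ x ∈ S, ∀ j, IsIntegral ℤ (x j)) :
    DiscreteTopology (Submodule.span ℤ (eucEmb K m '' S)) := by
  let P : Submodule ℤ (EuclideanSpace ℝ (Fin m × RIx K)) :=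
    (Submodule.pi Set.univ fun _ => mixedEmbedding.integerLattice K).comap
      ((eucVec K m).symm.toLinearMap.restrictScalars ℤ)
  have hP : Submodule.span ℤ (eucEmb K m '' S) ≤ P := by
    rw [Submodule.span_le]
    rintro _ ⟨x, hx, rfl⟩ j -
    exact ⟨⟨x j, hS x hx j⟩, (congrFun ((eucVec K m).symm_apply_apply (fun j => mixedEmbedding K (x j))) j).symm⟩
  let f : Submodule.span ℤ (eucEmb K m '' S) → (Fin m → mixedEmbedding.integerLattice K) :=
    fun v j => ⟨(eucVec K m).symm v j, hP v.2 j trivial⟩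
  refine DiscreteTopology.of_continuous_injective (f := f)
    (continuous_pi fun j => ((continuous_apply j).comp
      ((eucVec K m).symm.toLinearMap.continuous_of_finiteDimensional.comp
        continuous_subtype_val)).subtype_mk _)
    fun v w hvw => Subtype.ext <| (eucVec K m).symm.injective <| funext fun j =>
      congrArg Subtype.val (congrFun hvw j)

theorem norm_eucEmb_smul_row_le {n m : ℕ} (A : Matrix (Fin n) (Fin m) K) (a : K) (i : Fin n) :
    ‖eucEmb K m (a • A i)‖ ≤
      ‖eucMap K (mixedEmbedding K a)‖ / sK K * mnorm K (A.map (mixedEmbedding K)) := by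
  have := sK_pos K
  have h : eucEmb K m (a • A i) =
      eucVec K m (fun j => mixedEmbedding K a * A.map (mixedEmbedding K) i j) := by
    simp [eucEmb_apply]
  rw [h]
  exact (norm_eucVec_mul_le K _ _).trans
    (mul_le_mul_of_nonneg_left (norm_eucVec_row_le_mnorm K _ i) (by positivity))

abbrev latD {k m : ℕ} (D : Matrix (Fin k) (Fin m) K) :
    Submodule ℤ (EuclideanSpace ℝ (Fin m × RIx K)) :=
  Submodule.span ℤ (eucVec K m '' LamD K D)

instance {k m : ℕ} (D : Matrix (Fin k) (Fin m) K) : DiscreteTopology (latD K D) := by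
  rw [latD, image_LamD]
  exact discreteTopology_span_eucEmb_image K fun x hx => hx.2

theorem span_latD {k m : ℕ} (D : Matrix (Fin k) (Fin m) K) :
    Submodule.span ℝ (latD K D : Set (EuclideanSpace ℝ (Fin m × RIx K))) =
      Submodule.span ℝ (eucEmb K m '' rowSpanInt K D) := by
  rw [Submodule.span_span_of_tower, image_LamD]

def scaledRows {n m : ℕ} (A : Matrix (Fin n) (Fin m) K)
    (p : Fin n × Free.ChooseBasisIndex ℤ (𝓞 K)) : EuclideanSpace ℝ (Fin m × RIx K) :=
  eucEmb K m (integralBasis K p.2 • A p.1)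

theorem span_latD_eq {n k m : ℕ} {D : Matrix (Fin k) (Fin m) K}
    {A : Matrix (Fin n) (Fin m) K} (hA : ∀ i, A i ∈ rowSpanInt K D) (hrank : A.rank = k) :
    Submodule.span ℝ (latD K D : Set (EuclideanSpace ℝ (Fin m × RIx K))) =
      Submodule.span ℝ (Set.range (scaledRows K A)) := by
  rw [span_latD]
  refine le_antisymm (Submodule.span_le.mpr <| Set.image_subset_iff.mpr fun x hx =>
    map_mem_span_range_basis_smul _ _ A (rowSpanInt_subset_span_rows K hA hrank hx)) ?_
  exact Submodule.span_mono <| Set.range_subset_iff.mpr fun p =>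
    ⟨_, integralBasis_smul_mem_rowSpanInt K (hA p.1) p.2, rfl⟩

theorem finrank_span_latD_le {n k m : ℕ} {D : Matrix (Fin k) (Fin m) K}
    {A : Matrix (Fin n) (Fin m) K} (hA : ∀ i, A i ∈ rowSpanInt K D) (hrank : A.rank = k) :
    finrank ℝ (Submodule.span ℝ (latD K D : Set (EuclideanSpace ℝ (Fin m × RIx K)))) ≤
      k * finrank ℚ K := by
  rw [span_latD]
  refine (Submodule.finrank_mono (Submodule.span_mono (Set.image_mono
    (rowSpanInt_subset_span_rows K hA hrank)))).trans
      ((finrank_span_image_le _ (integralBasis K) _).trans_eq ?_)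
  rw [Matrix.finrank_span_range_eq_rank, hrank, ← finrank_eq_card_basis (integralBasis K)]

theorem eucEmb_mem_latD {k m : ℕ} {D : Matrix (Fin k) (Fin m) K} {v : Fin m → K}
    (hv : v ∈ rowSpanInt K D) : eucEmb K m v ∈ latD K D :=
  Submodule.subset_span (image_LamD K D ▸ Set.mem_image_of_mem _ hv)

theorem scaledRows_mem_latD {n k m : ℕ} {D : Matrix (Fin k) (Fin m) K}
    {A : Matrix (Fin n) (Fin m) K} (hA : ∀ i, A i ∈ rowSpanInt K D) :
    Set.range (scaledRows K A) ⊆ latD K D :=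
  Set.range_subset_iff.mpr fun p =>
    eucEmb_mem_latD K (integralBasis_smul_mem_rowSpanInt K (hA p.1) p.2)

def integralBasisNormSum : ℝ :=
  ∑ t, ‖eucMap K (mixedEmbedding K (integralBasis K t))‖ / sK K

theorem integralBasisNormSum_nonneg : 0 ≤ integralBasisNormSum K :=
  Finset.sum_nonneg fun _ _ => div_nonneg (norm_nonneg _) (sK_pos K).le

theorem norm_scaledRows_le {n m : ℕ} (A : Matrix (Fin n) (Fin m) K)
    (p : Fin n × Free.ChooseBasisIndex ℤ (𝓞 K)) :
    ‖scaledRows K A p‖ ≤ integralBasisNormSum K * mnorm K (A.map (mixedEmbedding K)) :=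
  (norm_eucEmb_smul_row_le K A _ p.1).trans <| mul_le_mul_of_nonneg_right
    (Finset.single_le_sum (f := fun t => ‖eucMap K (mixedEmbedding K (integralBasis K t))‖ / sK K)
      (fun _ _ => div_nonneg (norm_nonneg _) (sK_pos K).le) (Finset.mem_univ p.2))
    (norm_nonneg _)

end Paper

theorem height_upper_bound_in_F_general (K : Type) [Field K] [NumberField K]
    (n m k : ℕ)
    (csup : ℝ) (hcsup : 0 < csup) :
    ∃ C : ℝ, 0 < C ∧ ∀ T : ℝ, 1 ≤ T →
      ∀ D : Matrix (Fin k) (Fin m) K, D ∈ FkT K csup n k m T →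
        hgtD K D ≤ C * T ^ (k * Module.finrank ℚ K) := by
  set d := Module.finrank ℚ K
  set c := integralBasisNormSum K
  have hc : 0 ≤ c := integralBasisNormSum_nonneg K
  set γ := 1 + 2 * (k * d : ℕ) * (c * csup)
  have hγ : 1 ≤ γ := le_add_of_nonneg_right (by positivity)
  refine ⟨γ ^ (k * d), by positivity, fun T hT D hD => ?_⟩
  obtain ⟨-, A, hArows, hArank, hAnorm⟩ := hD
  obtain ⟨r, hr, hH⟩ : ∃ r ≤ k * d, hgtD K D ≤ (2 * r * (c * (csup * T))) ^ r :=
    ⟨_, finrank_span_latD_le K hArows hArank,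
      hgtV_le_of_span_eq (latD K D) (scaledRows_mem_latD K hArows)
        (span_latD_eq K hArows hArank).symm <| Set.forall_mem_range.mpr fun p =>
          (norm_scaledRows_le K A p).trans (mul_le_mul_of_nonneg_left hAnorm hc)⟩
  calc hgtD K D ≤ (2 * r * (c * (csup * T))) ^ r := hH
    _ ≤ (γ * T) ^ r := by
      have hT0 : 0 ≤ T := zero_le_one.trans hT
      gcongr ?_ ^ _
      calc 2 * r * (c * (csup * T)) = 2 * r * (c * csup) * T := by ring
        _ ≤ 2 * (k * d : ℕ) * (c * csup) * T := by gcongr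
        _ ≤ γ * T := by gcongr; exact le_add_of_nonneg_left zero_le_one
    _ ≤ (γ * T) ^ (k * d) := pow_le_pow_right₀ (one_le_mul_of_one_le_of_one_le hγ hT) hr
    _ = γ ^ (k * d) * T ^ (k * d) := mul_pow _ _ _

theorem height_upper_bound_in_F (K : Type) [Field K] [NumberField K]
    (n m k : ℕ) (hk : 1 ≤ k) (hkm : k ≤ m) (hmn : m < n)
    (csup : ℝ) (hcsup : 0 < csup) :
    ∃ C : ℝ, 0 < C ∧ ∀ T : ℝ, 1 ≤ T →
      ∀ D : Matrix (Fin k) (Fin m) K, D ∈ FkT K csup n k m T →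
        hgtD K D ≤ C * T ^ (k * Module.finrank ℚ K) :=
  height_upper_bound_in_F_general K n m k csup hcsup
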